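/- arXiv:2402.15482 — 5 statements merged into one kernel-verified Lean document; each statement's English description precedes it below -/
import Mathlib

section
/- Let H be a complex Hilbert space and T a bounded linear operator on H. Then T attains its norm (i.e., there exists a unit vector x with ‖Tx‖ = ‖T‖) if and only if its adjoint T* attains its norm. -/
/-! If `‖T x‖ = ‖T‖` with `‖x‖ = 1`, then
`‖T x‖² = re ⟪T† (T x), x⟫ ≤ ‖T† (T x)‖ ≤ ‖T†‖ ‖T x‖ = ‖T‖ ‖T x‖ = ‖T x‖²`,
so `T†` attains its norm at the unit vector in the direction of `T x` (any unit vector if `T = 0`).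
The converse is the same statement for `T†`, since `T†† = T`. -/

open ContinuousLinearMap

theorem ContinuousLinearMap.exists_norm_eq_one_and_norm_apply_eq_opNorm
    {𝕜 E F : Type*} [RCLike 𝕜] [NormedAddCommGroup E] [NormedSpace 𝕜 E]
    [SeminormedAddCommGroup F] [NormedSpace 𝕜 F] (S : E →L[𝕜] F) {y : E} (hy : y ≠ 0)
    (hSy : ‖S y‖ = ‖S‖ * ‖y‖) :
    ∃ x : E, ‖x‖ = 1 ∧ ‖S x‖ = ‖S‖ := by
  have hy' : ‖y‖ ≠ 0 := norm_ne_zero_iff.mpr hy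
  refine ⟨(‖y‖ : 𝕜)⁻¹ • y, norm_smul_inv_norm hy, ?_⟩
  rw [map_smul, norm_smul, hSy, norm_inv, RCLike.norm_ofReal, abs_norm,
    mul_left_comm, inv_mul_cancel₀ hy', mul_one]

section Adjoint

variable {𝕜 E F : Type*} [RCLike 𝕜] [NormedAddCommGroup E] [InnerProductSpace 𝕜 E]
  [CompleteSpace E] [NormedAddCommGroup F] [InnerProductSpace 𝕜 F] [CompleteSpace F]

theorem ContinuousLinearMap.norm_apply_sq_le_norm_adjoint_apply_apply_mul
    (T : E →L[𝕜] F) (x : E) : ‖T x‖ ^ 2 ≤ ‖adjoint T (T x)‖ * ‖x‖ :=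
  calc ‖T x‖ ^ 2 = RCLike.re (inner 𝕜 (adjoint T (T x)) x) := by
        rw [adjoint_inner_left, inner_self_eq_norm_sq]
    _ ≤ ‖inner 𝕜 (adjoint T (T x)) x‖ := RCLike.re_le_norm _
    _ ≤ ‖adjoint T (T x)‖ * ‖x‖ := norm_inner_le_norm _ _

theorem ContinuousLinearMap.norm_adjoint_apply_apply_eq
    (T : E →L[𝕜] F) {x : E} (hx : ‖T x‖ = ‖T‖ * ‖x‖) :
    ‖adjoint T (T x)‖ = ‖adjoint T‖ * ‖T x‖ := by
  refine le_antisymm (le_opNorm _ _) ?_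
  rw [adjoint.norm_map]
  rcases (norm_nonneg x).eq_or_lt with hx0 | hx0
  · simp [hx, ← hx0]
  refine le_of_mul_le_mul_right ?_ hx0
  calc ‖T‖ * ‖T x‖ * ‖x‖ = ‖T x‖ ^ 2 := by rw [hx]; ring
    _ ≤ ‖adjoint T (T x)‖ * ‖x‖ := norm_apply_sq_le_norm_adjoint_apply_apply_mul T x

-- Stated for endomorphisms: for `T : E →L[𝕜] F` with `F` trivial, `T†` has no unit vector to attain at.
theorem ContinuousLinearMap.exists_norm_eq_one_and_norm_adjoint_apply_eq
    (T : E →L[𝕜] E) (h : ∃ x : E, ‖x‖ = 1 ∧ ‖T x‖ = ‖T‖) :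
    ∃ y : E, ‖y‖ = 1 ∧ ‖adjoint T y‖ = ‖adjoint T‖ := by
  obtain ⟨x, hx1, hTx⟩ := h
  by_cases hT : T = 0
  · exact ⟨x, hx1, by simp [hT]⟩
  have hTx0 : T x ≠ 0 := by
    rw [← norm_ne_zero_iff, hTx, norm_ne_zero_iff]
    exact hT
  exact (adjoint T).exists_norm_eq_one_and_norm_apply_eq_opNorm hTx0
    (T.norm_adjoint_apply_apply_eq (by rw [hx1, mul_one, hTx]))

end Adjoint

theorem norm_attaining_iff_adjoint_norm_attaining
    {H : Type*} [NormedAddCommGroup H] [InnerProductSpace ℂ H] [CompleteSpace H]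
    (T : H →L[ℂ] H) :
    (∃ x : H, ‖x‖ = 1 ∧ ‖T x‖ = ‖T‖) ↔
      (∃ x : H, ‖x‖ = 1 ∧ ‖(ContinuousLinearMap.adjoint T) x‖ = ‖ContinuousLinearMap.adjoint T‖) := by
  refine ⟨T.exists_norm_eq_one_and_norm_adjoint_apply_eq, fun h => ?_⟩
  simpa only [adjoint_adjoint] using (adjoint T).exists_norm_eq_one_and_norm_adjoint_apply_eq h
end

section
/- Let A be a bounded operator on a complex Hilbert space with ‖A‖ ≤ 1, let b ∈ H, and suppose v ∈ H satisfies S v = A* b, where S is the (positive) square root of I − A*A. Then for every z ∈ H, ‖A z + b‖² = −‖S z − v‖² + ‖v‖² + ‖b‖² + ‖z‖². -/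
/-!
Expand both squares. Since `S` is self-adjoint, `S ∘ S = I - A*A` says `S*S + A*A = I`, so
`‖S z‖² + ‖A z‖² = ‖z‖²`; and `⟪S z, v⟫ = ⟪z, S v⟫ = ⟪z, A* b⟫ = ⟪A z, b⟫`, so the cross terms
of `‖A z + b‖²` and `‖S z - v‖²` agree.
-/

open scoped InnerProductSpace InnerProduct

namespace ContinuousLinearMap

variable {𝕜 E F G : Type*} [RCLike 𝕜]
  [NormedAddCommGroup E] [InnerProductSpace 𝕜 E] [CompleteSpace E]
  [NormedAddCommGroup F] [InnerProductSpace 𝕜 F] [CompleteSpace F]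
  [NormedAddCommGroup G] [InnerProductSpace 𝕜 G] [CompleteSpace G]

theorem norm_sq_add_norm_sq_of_adjoint_comp_add_adjoint_comp_eq_one
    (S : E →L[𝕜] F) (A : E →L[𝕜] G) (h : S† ∘L S + A† ∘L A = 1) (x : E) :
    ‖S x‖ ^ 2 + ‖A x‖ ^ 2 = ‖x‖ ^ 2 := by
  rw [apply_norm_sq_eq_inner_adjoint_left, apply_norm_sq_eq_inner_adjoint_left, ← map_add,
    ← inner_add_left, ← add_apply, h, one_apply_eq_self, inner_self_eq_norm_sq]

end ContinuousLinearMap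

open ContinuousLinearMap in
theorem key_norm_identity_general
    {H : Type*} [NormedAddCommGroup H] [InnerProductSpace ℂ H] [CompleteSpace H]
    (A S : H →L[ℂ] H) (hS : S.IsPositive)
    (hS2 : S ∘L S = 1 - ContinuousLinearMap.adjoint A ∘L A)
    (b v : H) (hv : S v = (ContinuousLinearMap.adjoint A) b) :
    ∀ z : H, ‖A z + b‖ ^ 2 = -‖S z - v‖ ^ 2 + ‖v‖ ^ 2 + ‖b‖ ^ 2 + ‖z‖ ^ 2 := by
  intro z
  have hS_adj : S† = S := hS.isSelfAdjoint.adjoint_eq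
  have hpyth : ‖S z‖ ^ 2 + ‖A z‖ ^ 2 = ‖z‖ ^ 2 :=
    norm_sq_add_norm_sq_of_adjoint_comp_add_adjoint_comp_eq_one S A
      (by rw [hS_adj, hS2, sub_add_cancel]) z
  have hcross : ⟪S z, v⟫_ℂ = ⟪A z, b⟫_ℂ := by
    rw [← adjoint_inner_right, hS_adj, hv, adjoint_inner_right]
  rw [norm_add_sq (𝕜 := ℂ), norm_sub_sq (𝕜 := ℂ), hcross]
  linarith

theorem key_norm_identity
    {H : Type*} [NormedAddCommGroup H] [InnerProductSpace ℂ H] [CompleteSpace H]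
    (A S : H →L[ℂ] H) (hA : ‖A‖ ≤ 1) (hS : S.IsPositive)
    (hS2 : S ∘L S = 1 - ContinuousLinearMap.adjoint A ∘L A)
    (b v : H) (hv : S v = (ContinuousLinearMap.adjoint A) b) :
    ∀ z : H, ‖A z + b‖ ^ 2 = -‖S z - v‖ ^ 2 + ‖v‖ ^ 2 + ‖b‖ ^ 2 + ‖z‖ ^ 2 :=
  key_norm_identity_general A S hS hS2 b v hv
end

section
/- Let A be a bounded operator on a complex Hilbert space with ‖A‖ ≤ 1, let S be the positive square root of I − A*A, and let v ∈ H be orthogonal to the kernel of S. Then v lies in the closure of the range of I − A. -/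
open scoped ComplexInnerProductSpace

/-!
If `A† u = u` then `re ⟪A u, u⟫ = ‖u‖²`, so `‖A u - u‖² = ‖A u‖² - ‖u‖² = -‖S u‖²`; hence
`ker (1 - A†) ≤ ker S`. Taking orthogonal complements, `v ∈ (ker S)ᗮ ≤ (ker (1 - A†))ᗮ`, which is
the closure of the range of `(1 - A†)† = 1 - A`.
-/

open ContinuousLinearMap
open scoped InnerProduct InnerProductSpace

namespace ContinuousLinearMap

variable {𝕜 E : Type*} [RCLike 𝕜] [NormedAddCommGroup E] [InnerProductSpace 𝕜 E] [CompleteSpace E]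
  {A S : E →L[𝕜] E}

theorem norm_sq_add_norm_sq_eq_of_comp_self_eq (hS : IsSelfAdjoint S)
    (hSA : S ∘L S = 1 - A† ∘L A) (u : E) : ‖S u‖ ^ 2 + ‖A u‖ ^ 2 = ‖u‖ ^ 2 := by
  have h : ⟪S u, S u⟫_𝕜 = ⟪u, u⟫_𝕜 - ⟪A u, A u⟫_𝕜 := by
    rw [← adjoint_inner_right, hS.adjoint_eq, ← comp_apply, hSA, sub_apply, one_apply_eq_self,
      inner_sub_right, comp_apply, adjoint_inner_right]
  have := congrArg RCLike.re h
  simp only [inner_self_eq_norm_sq, map_sub] at this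
  linarith

theorem ker_one_sub_adjoint_le_ker (hS : IsSelfAdjoint S) (hSA : S ∘L S = 1 - A† ∘L A) :
    (1 - A†).ker ≤ S.ker := by
  intro u hu
  have hfix : (A†) u = u := (sub_eq_zero.mp hu).symm
  have hre : RCLike.re ⟪A u, u⟫_𝕜 = ‖u‖ ^ 2 := by
    rw [← adjoint_inner_right, hfix, inner_self_eq_norm_sq]
  have hsq : ‖A u - u‖ ^ 2 + ‖S u‖ ^ 2 = 0 := by
    rw [norm_sub_sq (𝕜 := 𝕜), hre]
    linarith [norm_sq_add_norm_sq_eq_of_comp_self_eq hS hSA u]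
  have hSu : ‖S u‖ ^ 2 = 0 := by linarith [sq_nonneg ‖A u - u‖, sq_nonneg ‖S u‖]
  simpa using hSu

end ContinuousLinearMap

theorem min_vector_in_closure_range_general
    {H : Type*} [NormedAddCommGroup H] [InnerProductSpace ℂ H] [CompleteSpace H]
    (A S : H →L[ℂ] H) (hS : S.IsPositive)
    (hS2 : S ∘L S = 1 - ContinuousLinearMap.adjoint A ∘L A)
    (v : H) (hvker : ∀ u : H, S u = 0 → (inner ℂ v u : ℂ) = 0) :
    v ∈ closure (Set.range fun x : H => x - A x) := by
  have hv : v ∈ S.kerᗮ := fun u hu => inner_eq_zero_symm.mp (hvker u hu)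
  have hmem := Submodule.orthogonal_le (ker_one_sub_adjoint_le_ker hS.isSelfAdjoint hS2) hv
  rw [orthogonal_ker, map_sub, adjoint_adjoint, adjoint_one] at hmem
  rw [← SetLike.mem_coe, Submodule.topologicalClosure_coe] at hmem
  convert hmem using 2
  ext y
  simp

theorem min_vector_in_closure_range
    {H : Type*} [NormedAddCommGroup H] [InnerProductSpace ℂ H] [CompleteSpace H]
    (A S : H →L[ℂ] H) (hA : ‖A‖ ≤ 1) (hS : S.IsPositive)
    (hS2 : S ∘L S = 1 - ContinuousLinearMap.adjoint A ∘L A)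
    (v : H) (hvker : ∀ u : H, S u = 0 → (inner ℂ v u : ℂ) = 0) :
    v ∈ closure (Set.range fun x : H => x - A x) :=
  min_vector_in_closure_range_general A S hS hS2 v hvker
end

section
/- Let H be a complex Hilbert space, T a bounded operator on H, c a real number, and k₁, k₂, h₁, h₂ ∈ H with T* k₁ = h₁, T* k₂ = h₂, and T(h₁ + h₂) = c • (k₁ + k₂). Then ‖h₁‖² − c·‖k₁‖² = ‖h₂‖² − c·‖k₂‖². -/
open scoped InnerProductSpace

section

variable {𝕜 E F : Type*} [RCLike 𝕜]
  [NormedAddCommGroup E] [InnerProductSpace 𝕜 E] [CompleteSpace E]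
  [NormedAddCommGroup F] [InnerProductSpace 𝕜 F] [CompleteSpace F]

omit [CompleteSpace E] in
theorem re_inner_sub_add (x y : E) :
    RCLike.re ⟪x - y, x + y⟫_𝕜 = ‖x‖ ^ 2 - ‖y‖ ^ 2 := by
  rw [inner_sub_left, inner_add_right, inner_add_right, map_sub, map_add, map_add,
    inner_re_symm (𝕜 := 𝕜) y x, ← inner_self_eq_norm_sq (𝕜 := 𝕜),
    ← inner_self_eq_norm_sq (𝕜 := 𝕜)]
  ring

theorem inner_sub_add_eq_mul_of_adjoint (T : E →L[𝕜] F) (c : 𝕜) {k₁ k₂ : F} {h₁ h₂ : E}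
    (h1 : T.adjoint k₁ = h₁) (h2 : T.adjoint k₂ = h₂) (hT : T (h₁ + h₂) = c • (k₁ + k₂)) :
    ⟪h₁ - h₂, h₁ + h₂⟫_𝕜 = c * ⟪k₁ - k₂, k₁ + k₂⟫_𝕜 :=
  calc ⟪h₁ - h₂, h₁ + h₂⟫_𝕜 = ⟪T.adjoint (k₁ - k₂), h₁ + h₂⟫_𝕜 := by rw [map_sub, h1, h2]
    _ = ⟪k₁ - k₂, T (h₁ + h₂)⟫_𝕜 := T.adjoint_inner_left _ _
    _ = c * ⟪k₁ - k₂, k₁ + k₂⟫_𝕜 := by rw [hT, inner_smul_right]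

end

theorem extremal_normSq_identity
    {H : Type*} [NormedAddCommGroup H] [InnerProductSpace ℂ H] [CompleteSpace H]
    (T : H →L[ℂ] H) (c : ℝ) (k₁ k₂ h₁ h₂ : H)
    (h1 : (ContinuousLinearMap.adjoint T) k₁ = h₁)
    (h2 : (ContinuousLinearMap.adjoint T) k₂ = h₂)
    (heig : T h₁ + T h₂ = (c : ℂ) • k₁ + (c : ℂ) • k₂) :
    ‖h₁‖ ^ 2 - c * ‖k₁‖ ^ 2 = ‖h₂‖ ^ 2 - c * ‖k₂‖ ^ 2 := by
  have key := congrArg Complex.re <|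
    inner_sub_add_eq_mul_of_adjoint T c h1 h2 (by rw [map_add, heig, smul_add])
  rw [Complex.re_ofReal_mul, ← RCLike.re_to_complex, ← RCLike.re_to_complex,
    re_inner_sub_add, re_inner_sub_add] at key
  linarith
end

section
/- Let A be a bounded operator on a complex Hilbert space H with ‖A‖ ≤ 1, b ∈ H, and suppose v, w ∈ H satisfy S v = A* b where S is the positive square root of I − A*A. Then ‖A w + b‖² − ‖w‖² ≤ ‖v‖² + ‖b‖², with equality if and only if S w = v. -/
/-!
Since `S² = I - A*A`, the operators `A` and `S` jointly form an isometry: `‖A w‖² + ‖S w‖² = ‖w‖²`.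
Moving `A*` and `S` across the inner product turns `⟪b, A w⟫` into `⟪S v, w⟫ = ⟪v, S w⟫`. Expanding
`‖A w + b‖²` therefore completes a square:
`‖A w + b‖² - ‖w‖² = ‖v‖² + ‖b‖² - ‖S w - v‖²`.
-/

open scoped InnerProductSpace
open ContinuousLinearMap

section

variable {𝕜 H K : Type*} [RCLike 𝕜] [NormedAddCommGroup H] [InnerProductSpace 𝕜 H]
  [CompleteSpace H] [NormedAddCommGroup K] [InnerProductSpace 𝕜 K] [CompleteSpace K]
  {A : H →L[𝕜] K} {S : H →L[𝕜] H}

theorem norm_apply_sq_add_norm_apply_sq_of_comp_self (hS : IsSelfAdjoint S)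
    (hS2 : S ∘L S = 1 - adjoint A ∘L A) (x : H) : ‖A x‖ ^ 2 + ‖S x‖ ^ 2 = ‖x‖ ^ 2 := by
  have hSS : adjoint S ∘L S + adjoint A ∘L A = 1 := by
    rw [hS.adjoint_eq, hS2, sub_add_cancel]
  rw [apply_norm_sq_eq_inner_adjoint_left, apply_norm_sq_eq_inner_adjoint_left, ← RCLike.re.map_add,
    ← inner_add_left, add_comm, ← add_apply, hSS, one_apply_eq_self, inner_self_eq_norm_sq]

theorem inner_apply_eq_inner_apply_of_apply_eq_adjoint (hS : IsSelfAdjoint S) {b : K} {v : H}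
    (hv : S v = adjoint A b) (x : H) : ⟪b, A x⟫_𝕜 = ⟪v, S x⟫_𝕜 := by
  rw [← adjoint_inner_left, ← hv]
  exact hS.isSymmetric v x

theorem norm_add_sq_sub_norm_sq_eq (hS : IsSelfAdjoint S) (hS2 : S ∘L S = 1 - adjoint A ∘L A)
    {b : K} {v : H} (hv : S v = adjoint A b) (w : H) :
    ‖A w + b‖ ^ 2 - ‖w‖ ^ 2 = ‖v‖ ^ 2 + ‖b‖ ^ 2 - ‖S w - v‖ ^ 2 := by
  have hcross : RCLike.re ⟪A w, b⟫_𝕜 = RCLike.re ⟪S w, v⟫_𝕜 := by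
    rw [inner_re_symm, inner_apply_eq_inner_apply_of_apply_eq_adjoint hS hv, ← inner_re_symm]
  rw [norm_add_sq (𝕜 := 𝕜), norm_sub_sq (𝕜 := 𝕜), hcross,
    ← norm_apply_sq_add_norm_apply_sq_of_comp_self hS hS2 w]
  ring

end

theorem extremal_iff_sqrt_eq_general
    {H : Type*} [NormedAddCommGroup H] [InnerProductSpace ℂ H] [CompleteSpace H]
    (A S : H →L[ℂ] H) (hS : S.IsPositive)
    (hS2 : S ∘L S = 1 - ContinuousLinearMap.adjoint A ∘L A)
    (b v w : H) (hv : S v = (ContinuousLinearMap.adjoint A) b) :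
    ‖A w + b‖ ^ 2 - ‖w‖ ^ 2 ≤ ‖v‖ ^ 2 + ‖b‖ ^ 2 ∧
      (‖A w + b‖ ^ 2 - ‖w‖ ^ 2 = ‖v‖ ^ 2 + ‖b‖ ^ 2 ↔ S w = v) := by
  rw [norm_add_sq_sub_norm_sq_eq hS.isSelfAdjoint hS2 hv w]
  refine ⟨sub_le_self _ (sq_nonneg _), ?_⟩
  rw [sub_eq_self, sq_eq_zero_iff, norm_eq_zero, sub_eq_zero]

theorem extremal_iff_sqrt_eq
    {H : Type*} [NormedAddCommGroup H] [InnerProductSpace ℂ H] [CompleteSpace H]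
    (A S : H →L[ℂ] H) (hA : ‖A‖ ≤ 1) (hS : S.IsPositive)
    (hS2 : S ∘L S = 1 - ContinuousLinearMap.adjoint A ∘L A)
    (b v w : H) (hv : S v = (ContinuousLinearMap.adjoint A) b) :
    ‖A w + b‖ ^ 2 - ‖w‖ ^ 2 ≤ ‖v‖ ^ 2 + ‖b‖ ^ 2 ∧
      (‖A w + b‖ ^ 2 - ‖w‖ ^ 2 = ‖v‖ ^ 2 + ‖b‖ ^ 2 ↔ S w = v) :=
  extremal_iff_sqrt_eq_general A S hS hS2 b v w hv
end
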